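/- arXiv:2212.12268 — 3 statements merged into one kernel-verified Lean document; each statement's English description precedes it below -/
import Mathlib

section
/- Let U be a finite set with |U| ≥ 2 and let x : U → ℝ^d be a configuration of points. Define D(x) as the maximum over nontrivial partitions {S,T} of U of the minimum l∞-distance between points of S and points of T, and diam(x) as the maximum l∞-distance between any two points of the configuration. Then D(x) ≤ diam(x) ≤ (|U| - 1) · D(x). -/
open scoped BigOperators

/-- The maximal cluster-separation distance `D(x)`: the supremum over nontrivial
partitions `{S, Sᶜ}` of `U` of the minimal `l∞`-distance between the two clusters. -/
noncomputable def sepDist {d : ℕ} {U : Type*} [Fintype U] [DecidableEq U]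
    (x : U → (Fin d → ℝ)) : ℝ :=
  ⨆ S : {S : Finset U // S.Nonempty ∧ Sᶜ.Nonempty},
    ⨅ i : (S.1 : Finset U), ⨅ j : ((S.1ᶜ : Finset U)), ‖x i.1 - x j.1‖

/-- The `l∞`-diameter of a configuration. -/
noncomputable def configDiam {d : ℕ} {U : Type*} [Fintype U]
    (x : U → (Fin d → ℝ)) : ℝ :=
  ⨆ i : U, ⨆ j : U, ‖x i - x j‖

/-!
Every cut `{S, Sᶜ}` is crossed by a pair of points at distance at most `D(x)`, so the graph
joining the points at distance at most `D(x)` is connected. Two points are joined in it by a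
path with at most `|U| - 1` edges, and the triangle inequality along that path bounds their
distance by `(|U| - 1) · D(x)`.
-/

namespace SimpleGraph

theorem reachable_of_forall_exists_adj_cut {V : Type*} {G : SimpleGraph V} {a b : V}
    (h : ∀ S : Set V, a ∈ S → b ∉ S → ∃ i ∈ S, ∃ j ∉ S, G.Adj i j) : G.Reachable a b := by
  by_contra hab
  obtain ⟨i, hi, j, hj, hij⟩ := h {v | G.Reachable a v} Reachable.rfl hab
  exact hj (Reachable.trans hi hij.reachable)

end SimpleGraph

section ThresholdGraph

variable {U α : Type*} [PseudoMetricSpace α]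

def thresholdGraph (x : U → α) (r : ℝ) : SimpleGraph U :=
  SimpleGraph.fromRel fun u v => dist (x u) (x v) ≤ r

variable {x : U → α} {r : ℝ}

theorem thresholdGraph_adj {u v : U} :
    (thresholdGraph x r).Adj u v ↔ u ≠ v ∧ dist (x u) (x v) ≤ r := by
  simp [thresholdGraph, dist_comm (x v)]

theorem dist_le_length_mul_of_walk {a b : U} (p : (thresholdGraph x r).Walk a b) :
    dist (x a) (x b) ≤ p.length * r := by
  induction p with
  | nil => simp
  | @cons u v w huv q ih =>
    rw [SimpleGraph.Walk.length_cons, Nat.cast_succ, add_one_mul]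
    linarith [dist_triangle (x u) (x v) (x w), (thresholdGraph_adj.1 huv).2]

theorem dist_le_card_sub_one_mul_of_reachable [Fintype U] (hr : 0 ≤ r) {a b : U}
    (h : (thresholdGraph x r).Reachable a b) :
    dist (x a) (x b) ≤ (Fintype.card U - 1) * r := by
  obtain ⟨p, hp⟩ := h.exists_isPath
  have hlen : (p.length : ℝ) ≤ Fintype.card U - 1 := by
    rw [le_sub_iff_add_le]
    exact_mod_cast hp.length_lt
  calc dist (x a) (x b) ≤ p.length * r := dist_le_length_mul_of_walk p
    _ ≤ (Fintype.card U - 1) * r := mul_le_mul_of_nonneg_right hlen hr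

end ThresholdGraph

section Configuration

variable {d : ℕ} {U : Type*} [Fintype U] (x : U → (Fin d → ℝ))

theorem configDiam_nonneg : 0 ≤ configDiam x :=
  Real.iSup_nonneg fun _ => Real.iSup_nonneg fun _ => norm_nonneg _

theorem norm_sub_le_configDiam (i j : U) : ‖x i - x j‖ ≤ configDiam x :=
  (le_ciSup (f := fun j => ‖x i - x j‖) (Set.finite_range _).bddAbove j).trans
    (le_ciSup (f := fun i => ⨆ j, ‖x i - x j‖) (Set.finite_range _).bddAbove i)

variable [DecidableEq U]

theorem sepDist_nonneg : 0 ≤ sepDist x :=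
  Real.iSup_nonneg fun _ => Real.iInf_nonneg fun _ => Real.iInf_nonneg fun _ => norm_nonneg _

theorem sepDist_le_configDiam : sepDist x ≤ configDiam x := by
  refine Real.iSup_le ?_ (configDiam_nonneg x)
  rintro ⟨S, ⟨i, hi⟩, ⟨j, hj⟩⟩
  calc _ ≤ ⨅ j : (Sᶜ : Finset U), ‖x i - x j‖ :=
        ciInf_le (f := fun i : S => ⨅ j : (Sᶜ : Finset U), ‖x i - x j‖)
          (Set.finite_range _).bddBelow ⟨i, hi⟩
    _ ≤ ‖x i - x j‖ :=
        ciInf_le (f := fun j : (Sᶜ : Finset U) => ‖x i - x j‖) (Set.finite_range _).bddBelow ⟨j, hj⟩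
    _ ≤ configDiam x := norm_sub_le_configDiam x i j

theorem exists_norm_sub_le_sepDist {S : Finset U} (hS : S.Nonempty) (hSc : Sᶜ.Nonempty) :
    ∃ i ∈ S, ∃ j ∉ S, ‖x i - x j‖ ≤ sepDist x := by
  have := hS.to_subtype
  have := hSc.to_subtype
  obtain ⟨i, hi⟩ := exists_eq_ciInf_of_finite
    (f := fun i : S => ⨅ j : (Sᶜ : Finset U), ‖x i - x j‖)
  obtain ⟨j, hj⟩ := exists_eq_ciInf_of_finite (f := fun j : (Sᶜ : Finset U) => ‖x i - x j‖)
  refine ⟨i, i.2, j, Finset.mem_compl.1 j.2, ?_⟩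
  rw [hj, hi]
  exact le_ciSup (f := fun T : {S : Finset U // S.Nonempty ∧ Sᶜ.Nonempty} =>
      ⨅ i : (T.1 : Finset U), ⨅ j : (T.1ᶜ : Finset U), ‖x i - x j‖)
    (Set.finite_range _).bddAbove ⟨S, hS, hSc⟩

theorem reachable_thresholdGraph_sepDist (a b : U) :
    (thresholdGraph x (sepDist x)).Reachable a b := by
  classical
  refine SimpleGraph.reachable_of_forall_exists_adj_cut fun S ha hb => ?_
  obtain ⟨i, hi, j, hj, hij⟩ := exists_norm_sub_le_sepDist x (S := S.toFinset)
    ⟨a, by simpa using ha⟩ ⟨b, by simpa using hb⟩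
  rw [Set.mem_toFinset] at hi hj
  exact ⟨i, hi, j, hj, thresholdGraph_adj.2 ⟨ne_of_mem_of_not_mem hi hj, by rwa [dist_eq_norm]⟩⟩

theorem configDiam_le_card_sub_one_mul_sepDist :
    configDiam x ≤ (Fintype.card U - 1 : ℝ) * sepDist x := by
  cases isEmpty_or_nonempty U
  · simp [configDiam, sepDist]
  · refine ciSup_le fun i => ciSup_le fun j => ?_
    rw [← dist_eq_norm]
    exact dist_le_card_sub_one_mul_of_reachable (sepDist_nonneg x)
      (reachable_thresholdGraph_sepDist x i j)

end Configuration

theorem sepDist_le_diam_le_card_mul_sepDist_general {d : ℕ} {U : Type*} [Fintype U] [DecidableEq U]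
    (x : U → (Fin d → ℝ)) :
    sepDist x ≤ configDiam x ∧
      configDiam x ≤ (Fintype.card U - 1 : ℝ) * sepDist x :=
  ⟨sepDist_le_configDiam x, configDiam_le_card_sub_one_mul_sepDist x⟩

theorem sepDist_le_diam_le_card_mul_sepDist {d : ℕ} {U : Type*} [Fintype U] [DecidableEq U]
    (hU : 2 ≤ Fintype.card U) (x : U → (Fin d → ℝ)) :
    sepDist x ≤ configDiam x ∧
      configDiam x ≤ (Fintype.card U - 1 : ℝ) * sepDist x :=
  sepDist_le_diam_le_card_mul_sepDist_general x
end

section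
/- For every connected graph G on vertex set {0,…,k} with k ≥ 1 and every non-edge e of G, one has v(G ∪ e) < v(G), where v(H) := ∫_{ℝ^k} 1{H ⊆ 𝒢_{1,k}(0,u_1,…,u_k;1)} d(u_1,…,u_k) is the (one-dimensional) connectivity volume. -/
open MeasureTheory
open scoped Classical

/-- The geometric graph on the reals `0, u_1, …, u_k`: `i` and `j` are adjacent
iff `i ≠ j` and `|u_i − u_j| ≤ 1` (with `u_0 = 0`). -/
def geomGraph1 {k : ℕ} (u : Fin k → ℝ) : SimpleGraph (Fin (k + 1)) where
  Adj i j := i ≠ j ∧ |(Fin.cons (0:ℝ) u : Fin (k+1) → ℝ) i - (Fin.cons (0:ℝ) u : Fin (k+1) → ℝ) j| ≤ 1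
  symm := by
    constructor
    intro i j h
    exact ⟨h.1.symm, by rw [abs_sub_comm]; exact h.2⟩
  loopless := ⟨fun i h => h.1 rfl⟩

/-- The one-dimensional connectivity volume
`v(H) := ∫_{ℝ^k} 1{H ⊆ 𝒢_{1,k}(0,u_1,…,u_k;1)} d(u_1,…,u_k)`. -/
noncomputable def connVol {k : ℕ} (H : SimpleGraph (Fin (k + 1))) : ℝ :=
  ∫ u : Fin k → ℝ, Set.indicator {u : Fin k → ℝ | H ≤ geomGraph1 u} (fun _ => (1 : ℝ)) u

/-! Adding the edge `ij` removes from the admissible region the configurations in which every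
edge of `G` has length `< 1` while `i` and `j` are more than `1` apart. This set is open, and it is
nonempty: put `i` at `0`, its neighbours at `2/3` and all other vertices at `4/3`. Connectedness
of `G` bounds the admissible region, so both volumes are finite and the removed open set makes the
inequality strict. -/

theorem MeasureTheory.Measure.measure_lt_of_isOpen_subset_sdiff {X : Type*} [TopologicalSpace X]
    [MeasurableSpace X] {μ : Measure X} [μ.IsOpenPosMeasure] {s t U : Set X} (hst : s ⊆ t)
    (hs : NullMeasurableSet s μ) (hs_fin : μ s ≠ ⊤) (hU : IsOpen U) (hU_ne : U.Nonempty)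
    (hU_sub : U ⊆ t \ s) : μ s < μ t := by
  have hpos : 0 < μ (t \ s) := (hU.measure_pos μ hU_ne).trans_le (measure_mono hU_sub)
  rwa [measure_sdiff hst hs hs_fin, tsub_pos_iff_lt] at hpos

section GeomGraph

variable {k : ℕ}

def vertexPos (u : Fin k → ℝ) : Fin (k + 1) → ℝ := Fin.cons 0 u

lemma vertexPos_shift (x : Fin (k + 1) → ℝ) :
    vertexPos (fun m => x m.succ - x 0) = fun a => x a - x 0 := by
  ext a
  cases a using Fin.cases <;> simp [vertexPos]

lemma continuous_abs_vertexPos_sub (a b : Fin (k + 1)) :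
    Continuous fun u : Fin k → ℝ => |vertexPos u a - vertexPos u b| := by
  have hpos : Continuous (vertexPos (k := k)) := continuous_const.finCons continuous_id
  fun_prop

lemma le_geomGraph1_iff {H : SimpleGraph (Fin (k + 1))} {u : Fin k → ℝ} :
    H ≤ geomGraph1 u ↔ ∀ a b, H.Adj a b → |vertexPos u a - vertexPos u b| ≤ 1 :=
  ⟨fun h _ _ hab => (h hab).2, fun h _ _ hab => ⟨hab.ne, h _ _ hab⟩⟩

lemma abs_vertexPos_sub_le_length {G : SimpleGraph (Fin (k + 1))} {u : Fin k → ℝ}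
    (hu : G ≤ geomGraph1 u) {a b : Fin (k + 1)} (p : G.Walk a b) :
    |vertexPos u a - vertexPos u b| ≤ p.length := by
  induction p with
  | nil => simp
  | @cons a c b hac p ih =>
    rw [SimpleGraph.Walk.length_cons, Nat.cast_succ, add_comm]
    calc |vertexPos u a - vertexPos u b|
        ≤ |vertexPos u a - vertexPos u c| + |vertexPos u c - vertexPos u b| := abs_sub_le _ _ _
      _ ≤ 1 + p.length := add_le_add (le_geomGraph1_iff.1 hu a c hac) ih

def admissibleSet (H : SimpleGraph (Fin (k + 1))) : Set (Fin k → ℝ) :=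
  {u | H ≤ geomGraph1 u}

lemma admissibleSet_anti {H H' : SimpleGraph (Fin (k + 1))} (h : H ≤ H') :
    admissibleSet H' ⊆ admissibleSet H :=
  fun _ hu => h.trans hu

lemma isClosed_admissibleSet (H : SimpleGraph (Fin (k + 1))) : IsClosed (admissibleSet H) := by
  simp only [admissibleSet, le_geomGraph1_iff, Set.ofPred_forall]
  exact isClosed_iInter fun a => isClosed_iInter fun b => isClosed_iInter fun _ =>
    isClosed_le (continuous_abs_vertexPos_sub a b) continuous_const

lemma connVol_eq_volume (H : SimpleGraph (Fin (k + 1))) :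
    connVol H = (volume (admissibleSet H)).toReal :=
  integral_indicator_one (isClosed_admissibleSet H).measurableSet

lemma admissibleSet_subset_closedBall {G : SimpleGraph (Fin (k + 1))} (hG : G.Connected) :
    admissibleSet G ⊆ Metric.closedBall 0 k := by
  intro u hu
  rw [mem_closedBall_zero_iff, pi_norm_le_iff_of_nonneg (Nat.cast_nonneg k)]
  intro m
  obtain ⟨p, hp⟩ := (hG.preconnected m.succ 0).some.toPath
  have hlen : p.length ≤ k := Nat.lt_succ_iff.1 (by simpa using hp.length_lt)
  have hdist := abs_vertexPos_sub_le_length hu p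
  simp only [vertexPos, Fin.cons_succ, Fin.cons_zero, sub_zero] at hdist
  exact hdist.trans (by exact_mod_cast hlen)

lemma volume_admissibleSet_lt_top {G : SimpleGraph (Fin (k + 1))} (hG : G.Connected) :
    volume (admissibleSet G) < ⊤ :=
  (measure_mono (admissibleSet_subset_closedBall hG)).trans_lt measure_closedBall_lt_top

def separatingSet (G : SimpleGraph (Fin (k + 1))) (i j : Fin (k + 1)) : Set (Fin k → ℝ) :=
  {u | (∀ a b, G.Adj a b → |vertexPos u a - vertexPos u b| < 1) ∧
    1 < |vertexPos u i - vertexPos u j|}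

variable {G : SimpleGraph (Fin (k + 1))} {i j : Fin (k + 1)}

lemma isOpen_separatingSet : IsOpen (separatingSet G i j) := by
  simp only [separatingSet, Set.ofPred_and, Set.ofPred_forall]
  refine .inter ?_ (isOpen_lt continuous_const (continuous_abs_vertexPos_sub i j))
  exact isOpen_iInter_of_finite fun a => isOpen_iInter_of_finite fun b =>
    isOpen_iInter_of_finite fun _ => isOpen_lt (continuous_abs_vertexPos_sub a b) continuous_const

lemma separatingSet_nonempty (hij : i ≠ j) (hnadj : ¬G.Adj i j) :
    (separatingSet G i j).Nonempty := by
  let x : Fin (k + 1) → ℝ := fun v => if v = i then 0 else if G.Adj i v then 2 / 3 else 4 / 3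
  refine ⟨fun m => x m.succ - x 0, fun a b hab => ?_, ?_⟩
  all_goals simp only [vertexPos_shift, sub_sub_sub_cancel_right]
  · have hba := hab.symm
    simp only [x]
    split_ifs <;> simp_all <;> norm_num [abs_lt]
  · norm_num [x, hij.symm, hnadj]

lemma separatingSet_subset_sdiff (hij : i ≠ j) :
    separatingSet G i j ⊆
      admissibleSet G \ admissibleSet (G ⊔ SimpleGraph.fromEdgeSet {s(i, j)}) := by
  rintro u ⟨hG, hsep⟩
  refine ⟨le_geomGraph1_iff.2 fun a b hab => (hG a b hab).le, fun hu => ?_⟩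
  have hadj : (G ⊔ SimpleGraph.fromEdgeSet {s(i, j)}).Adj i j := Or.inr ⟨rfl, hij⟩
  exact (le_geomGraph1_iff.1 hu i j hadj).not_gt hsep

end GeomGraph

theorem connVol_union_nonedge_lt_general {k : ℕ} (G : SimpleGraph (Fin (k + 1)))
    (hG : G.Connected) :
    ∀ e ∈ Gᶜ.edgeFinset,
      connVol (G ⊔ SimpleGraph.fromEdgeSet {e}) < connVol G := by
  intro e he
  induction e using Sym2.ind with
  | _ i j =>
  rw [SimpleGraph.mem_edgeFinset, SimpleGraph.mem_edgeSet, SimpleGraph.compl_adj] at he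
  obtain ⟨hij, hnadj⟩ := he
  have hsub := admissibleSet_anti (le_sup_left : G ≤ G ⊔ SimpleGraph.fromEdgeSet {s(i, j)})
  have hfin := volume_admissibleSet_lt_top hG
  have hfin' := ((measure_mono hsub).trans_lt hfin).ne
  rw [connVol_eq_volume, connVol_eq_volume, ENNReal.toReal_lt_toReal hfin' hfin.ne]
  exact Measure.measure_lt_of_isOpen_subset_sdiff hsub
    (isClosed_admissibleSet _).measurableSet.nullMeasurableSet hfin' isOpen_separatingSet
    (separatingSet_nonempty hij hnadj) (separatingSet_subset_sdiff hij)

/-- For every connected graph `G` on `{0,…,k}` with `k ≥ 1` and every non-edge `e` of `G`,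
adding `e` strictly decreases the connectivity volume: `v(G ∪ e) < v(G)`. -/
theorem connVol_union_nonedge_lt {k : ℕ} (hk : 1 ≤ k) (G : SimpleGraph (Fin (k + 1)))
    (hG : G.Connected) :
    ∀ e ∈ Gᶜ.edgeFinset,
      connVol (G ⊔ SimpleGraph.fromEdgeSet {e}) < connVol G :=
  connVol_union_nonedge_lt_general G hG
end

section
/- Cayley's formula: the number of labeled trees on a vertex set with n ≥ 1 elements is n^{n−2} (equivalently, the number of trees on {0,1,…,k} is (k+1)^{k−1}). -/
/-!
Joyal's proof. A tree with two marked vertices, a head and a tail, is the same as a parent map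
`p : α → α` pointing every vertex towards the head, together with the tail. The path from the tail
to the head (the spine) lists its vertex set `C` in some order; matching that order with a fixed
enumeration of `C` turns it into a permutation of `C`. Keeping `p` off the spine gives a map
`α → α` whose periodic points are exactly `C`, and every map `α → α` arises in exactly one way,
since its periodic points carry a permutation and all other points flow into them. Hence
`n² · #trees = nⁿ`.
-/

open Function SimpleGraph

variable {α : Type*}

namespace Function

theorem exists_iterate_mem_periodicPts [Finite α] (f : α → α) (x : α) :
    ∃ k, f^[k] x ∈ periodicPts f := by
  obtain ⟨i, j, hne, he⟩ := Finite.exists_ne_map_eq_of_infinite (f^[·] x)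
  wlog hij : i < j generalizing i j
  · exact this j i hne.symm he.symm (by omega)
  refine ⟨i, mk_mem_periodicPts (n := j - i) (by omega) ?_⟩
  rw [IsPeriodicPt, IsFixedPt, ← iterate_add_apply, Nat.sub_add_cancel hij.le]
  exact he.symm

theorem exists_iterate_mem_of_eqOn_compl {C : Set α} {f g : α → α} (hfg : Set.EqOn f g Cᶜ)
    (hg : ∀ x, ∃ k, g^[k] x ∈ C) (x : α) : ∃ k, f^[k] x ∈ C := by
  obtain ⟨k, hk⟩ := hg x
  induction k generalizing x with
  | zero => exact ⟨0, hk⟩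
  | succ k ih =>
    by_cases hx : x ∈ C
    · exact ⟨0, hx⟩
    obtain ⟨j, hj⟩ := ih (g x) hk
    exact ⟨j + 1, by rwa [iterate_succ_apply, hfg hx]⟩

theorem periodicPts_eq_of_mapsTo_of_injOn {C : Set α} {f : α → α} (hC : C.Finite)
    (hmaps : Set.MapsTo f C C) (hinj : Set.InjOn f C) (hreach : ∀ x, ∃ k, f^[k] x ∈ C) :
    periodicPts f = C := by
  ext x
  constructor
  · intro hx
    obtain ⟨n, hn, hper⟩ := mem_periodicPts.1 hx
    obtain ⟨k, hk⟩ := hreach x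
    have hmem : f^[n * k - k] (f^[k] x) ∈ C := hmaps.iterate _ hk
    rwa [← iterate_add_apply, Nat.sub_add_cancel (Nat.le_mul_of_pos_left k hn),
      (hper.mul_const k).eq] at hmem
  · intro hx
    have : Finite C := hC
    have hper := (hmaps.restrict_inj.2 hinj).mem_periodicPts ⟨x, hx⟩
    exact Semiconj.mapsTo_periodicPts (g := Subtype.val) (fun _ => rfl) hper

noncomputable def periodicPtsFinset [Finite α] (f : α → α) : Finset α :=
  (Set.toFinite (periodicPts f)).toFinset

theorem mem_periodicPtsFinset [Finite α] {f : α → α} {u : α} :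
    u ∈ periodicPtsFinset f ↔ u ∈ periodicPts f :=
  Set.Finite.mem_toFinset _

end Function

structure IsParentMap (p : α → α) (r : α) : Prop where
  apply_root : p r = r
  exists_iterate_eq : ∀ v, ∃ k, p^[k] v = r

def funGraph (p : α → α) : SimpleGraph α := SimpleGraph.fromRel fun x y => p x = y

theorem funGraph_adj {p : α → α} {x y : α} :
    (funGraph p).Adj x y ↔ x ≠ y ∧ (p x = y ∨ p y = x) :=
  SimpleGraph.fromRel_adj ..

theorem funGraph_adj_apply {p : α → α} {x : α} (hx : p x ≠ x) : (funGraph p).Adj x (p x) :=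
  funGraph_adj.2 ⟨hx.symm, Or.inl rfl⟩

theorem funGraph_reachable_iterate (p : α → α) (k : ℕ) (v : α) :
    (funGraph p).Reachable v (p^[k] v) := by
  induction k generalizing v with
  | zero => rfl
  | succ k ih =>
    by_cases hv : p v = v
    · simpa only [iterate_succ_apply, hv] using ih v
    · exact (funGraph_adj_apply hv).reachable.trans (ih (p v))

namespace IsParentMap

variable {p : α → α} {r : α}

theorem eq_root_of_isPeriodicPt (hp : IsParentMap p r) {n : ℕ} {v : α} (hn : 0 < n)
    (hv : IsPeriodicPt p n v) : v = r := by
  obtain ⟨k, hk⟩ := hp.exists_iterate_eq v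
  rw [← (hv.mul_const k).eq, ← Nat.sub_add_cancel (Nat.le_mul_of_pos_left k hn),
    iterate_add_apply, hk, iterate_fixed hp.apply_root]

theorem connected (hp : IsParentMap p r) : (funGraph p).Connected := by
  refine (connected_iff_exists_forall_reachable _).2 ⟨r, fun v => ?_⟩
  obtain ⟨k, rfl⟩ := hp.exists_iterate_eq v
  exact (funGraph_reachable_iterate p k v).symm

theorem edgeSet_subset_image (hp : IsParentMap p r) :
    (funGraph p).edgeSet ⊆ (fun v => s(v, p v)) '' {r}ᶜ := by
  have key : ∀ x, x ≠ p x → s(x, p x) ∈ (fun v => s(v, p v)) '' {r}ᶜ := fun x hx =>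
    ⟨x, fun hxr => hx (by rw [Set.mem_singleton_iff.1 hxr, hp.apply_root]), rfl⟩
  intro e he
  induction e with | h x y => ?_
  rw [mem_edgeSet, funGraph_adj] at he
  obtain ⟨hne, rfl | rfl⟩ := he
  · exact key x hne
  · exact Sym2.eq_swap ▸ key y hne.symm

theorem isTree [Finite α] (hp : IsParentMap p r) : (funGraph p).IsTree := by
  have : Nonempty α := ⟨r⟩
  refine isTree_iff_connected_and_card.2 ⟨hp.connected, le_antisymm ?_ ?_⟩
  · calc Nat.card (funGraph p).edgeSet + 1
        ≤ ((fun v => s(v, p v)) '' {r}ᶜ).ncard + 1 := by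
          gcongr
          exact Set.ncard_le_ncard hp.edgeSet_subset_image
      _ ≤ ({r}ᶜ : Set α).ncard + 1 := by gcongr; exact Set.ncard_image_le
      _ = Nat.card α := by
          rw [Set.ncard_compl, Set.ncard_singleton, Nat.sub_add_cancel Nat.card_pos]
  · exact hp.connected.card_vert_le_card_edgeSet_add_one

theorem exists_isPath_snd_eq (hp : IsParentMap p r) (v : α) :
    ∃ P : (funGraph p).Walk v r, P.IsPath ∧ P.snd = p v := by
  suffices h : ∃ P : (funGraph p).Walk v r,
      P.IsPath ∧ P.snd = p v ∧ ∀ u ∈ P.support, ∃ j, p^[j] v = u from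
    h.imp fun _ hP => ⟨hP.1, hP.2.1⟩
  obtain ⟨k, hk⟩ := hp.exists_iterate_eq v
  induction k generalizing v with
  | zero =>
    subst hk
    refine ⟨.nil, .nil, hp.apply_root.symm, fun u hu => ⟨0, ?_⟩⟩
    exact (Walk.mem_support_nil_iff.1 hu).symm
  | succ k ih =>
    by_cases hv : p v = v
    · exact ih v (by rwa [iterate_succ_apply, hv] at hk)
    obtain ⟨P, hP, -, hsupp⟩ := ih (p v) hk
    have hvP : v ∉ P.support := by
      intro hmem
      obtain ⟨j, hj⟩ := hsupp v hmem
      exact hv (hp.eq_root_of_isPeriodicPt (Nat.succ_pos j) hj ▸ hp.apply_root)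
    refine ⟨.cons (funGraph_adj_apply hv) P, hP.cons hvP, Walk.snd_cons .., fun u hu => ?_⟩
    rw [Walk.support_cons, List.mem_cons] at hu
    obtain rfl | hu := hu
    · exact ⟨0, rfl⟩
    · obtain ⟨j, rfl⟩ := hsupp u hu
      exact ⟨j + 1, rfl⟩

theorem eq_of_funGraph_eq [Finite α] {q : α → α} (hp : IsParentMap p r) (hq : IsParentMap q r)
    (h : funGraph p = funGraph q) : p = q := by
  funext v
  obtain ⟨P, hP, hPsnd⟩ := hp.exists_isPath_snd_eq v
  obtain ⟨Q, hQ, hQsnd⟩ := h ▸ hq.exists_isPath_snd_eq v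
  rw [← hPsnd, ← hQsnd, (hp.isTree.existsUnique_path v r).unique hP hQ]

end IsParentMap

theorem SimpleGraph.Connected.exists_isParentMap_le {G : SimpleGraph α} (hG : G.Connected)
    (r : α) : ∃ p, IsParentMap p r ∧ funGraph p ≤ G := by
  have descend : ∀ v, v ≠ r → ∃ w, G.Adj v w ∧ G.dist w r < G.dist v r := by
    intro v hv
    obtain ⟨P, hP⟩ := hG.exists_walk_length_eq_dist v r
    cases P with
    | nil => exact absurd rfl hv
    | cons hadj Q =>
      refine ⟨_, hadj, ?_⟩
      rw [← hP, Walk.length_cons]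
      exact Nat.lt_succ_of_le (dist_le Q)
  choose! parent hadj hdist using descend
  classical
  let p v := if v = r then r else parent v
  refine ⟨p, ⟨if_pos rfl, fun v => ?_⟩, fun x y hxy => ?_⟩
  · induction hd : G.dist v r using Nat.strong_induction_on generalizing v with
    | _ n ih =>
      by_cases hv : v = r
      · exact ⟨0, hv⟩
      obtain ⟨k, hk⟩ := ih _ (hd ▸ hdist v hv) (parent v) rfl
      exact ⟨k + 1, by rwa [iterate_succ_apply, show p v = parent v from if_neg hv]⟩
  · have hparent : ∀ x y, x ≠ y → p x = y → G.Adj x y := by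
      intro x y hne hxy
      have hx : x ≠ r := by
        rintro rfl
        exact hne (by simpa [p] using hxy)
      simpa [p, hx, ← hxy] using hadj x hx
    obtain ⟨hne, h | h⟩ := funGraph_adj.1 hxy
    · exact hparent x y hne h
    · exact (hparent y x hne.symm h).symm

theorem SimpleGraph.IsTree.exists_isParentMap {G : SimpleGraph α} (hG : G.IsTree) (r : α) :
    ∃ p, IsParentMap p r ∧ funGraph p = G := by
  obtain ⟨p, hp, hle⟩ := hG.connected.exists_isParentMap_le r
  exact ⟨p, hp, (isTree_iff_minimal_connected.1 hG).eq_of_le hp.connected hle⟩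

noncomputable def parentMapEquivTree [Finite α] (r : α) :
    {p : α → α // IsParentMap p r} ≃ {G : SimpleGraph α // G.IsTree} :=
  Equiv.ofBijective (fun p => ⟨funGraph p.1, p.2.isTree⟩)
    ⟨fun p q h => Subtype.ext (p.2.eq_of_funGraph_eq q.2 (congrArg Subtype.val h)),
      fun G => by
        obtain ⟨p, hp, hpG⟩ := G.2.exists_isParentMap r
        exact ⟨⟨p, hp⟩, Subtype.ext hpG⟩⟩

namespace List

theorem eq_iterate_of_getElem_succ {s : List α} {p : α → α} (hne : s ≠ [])
    (h : ∀ i (hi : i + 1 < s.length), p s[i] = s[i + 1]) :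
    s = List.iterate p (s.head hne) s.length := by
  have key : ∀ i (hi : i < s.length), s[i] = p^[i] (s.head hne) := by
    intro i hi
    induction i with
    | zero => exact (List.head_eq_getElem hne).symm
    | succ i ih => rw [iterate_succ_apply', ← ih (by omega), h i hi]
  exact List.ext_getElem (List.length_iterate ..).symm fun i hi _ => by
    rw [List.getElem_iterate, key i hi]

variable [DecidableEq α]

theorem Nodup.nextOr_getElem {s : List α} (hs : s.Nodup) {i : ℕ} (hi : i + 1 < s.length)
    (d : α) : s.nextOr s[i] d = s[i + 1] := by
  have hmem : s[i] ∈ s.dropLast := by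
    rw [← List.getElem_dropLast (by rw [List.length_dropLast]; omega)]
    exact List.getElem_mem _
  simp only [nextOr_eq_getElem_idxOf_succ_of_mem_dropLast hmem, hs.idxOf_getElem]

theorem Nodup.nextOr_getLast {s : List α} (hs : s.Nodup) (hne : s ≠ []) (d : α) :
    s.nextOr (s.getLast hne) d = d := by
  refine nextOr_getLast_of_notMem_dropLast hne (fun hmem => ?_) d
  rw [← List.dropLast_append_getLast hne, List.nodup_append] at hs
  exact hs.2.2 _ hmem _ (List.mem_singleton_self _) rfl

end List

/-- Joyal's vertebrate: a tree, given by its parent map towards `head`, with a second marked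
vertex `tail`. -/
@[ext]
structure Vertebrate (α : Type*) where
  head : α
  tail : α
  parent : α → α
  isParentMap : IsParentMap parent head

namespace Vertebrate

section Spine

variable (x : Vertebrate α)

open Classical in
noncomputable def spineLength : ℕ := Nat.find (x.isParentMap.exists_iterate_eq x.tail)

noncomputable def spine : List α := List.iterate x.parent x.tail (x.spineLength + 1)

theorem length_spine : x.spine.length = x.spineLength + 1 := List.length_iterate ..

theorem getElem_spine {i : ℕ} (hi : i < x.spine.length) : x.spine[i] = x.parent^[i] x.tail :=
  List.getElem_iterate ..

theorem iterate_spineLength : x.parent^[x.spineLength] x.tail = x.head := by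
  classical
  exact Nat.find_spec (x.isParentMap.exists_iterate_eq x.tail)

theorem iterate_ne_head {i : ℕ} (hi : i < x.spineLength) : x.parent^[i] x.tail ≠ x.head := by
  classical
  exact Nat.find_min (x.isParentMap.exists_iterate_eq x.tail) hi

theorem iterate_injOn {i j : ℕ} (hi : i ≤ x.spineLength) (hj : j ≤ x.spineLength)
    (hij : x.parent^[i] x.tail = x.parent^[j] x.tail) : i = j := by
  by_contra hne
  wlog hlt : i < j generalizing i j
  · exact this hj hi hij.symm (Ne.symm hne) (by omega)
  have hper : IsPeriodicPt x.parent (j - i) (x.parent^[i] x.tail) := by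
    rw [IsPeriodicPt, IsFixedPt, ← iterate_add_apply, Nat.sub_add_cancel hlt.le, hij]
  exact x.iterate_ne_head (by omega) (x.isParentMap.eq_root_of_isPeriodicPt (by omega) hper)

theorem spine_nodup : x.spine.Nodup :=
  List.nodup_iff_injective_get.2 fun ⟨i, hi⟩ ⟨j, hj⟩ hij => by
    rw [length_spine] at hi hj
    simpa using x.iterate_injOn (by omega) (by omega) (by simpa [getElem_spine] using hij)

theorem spine_ne_nil : x.spine ≠ [] := List.ne_nil_of_length_pos (by simp [length_spine])

theorem getLast_spine : x.spine.getLast x.spine_ne_nil = x.head := by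
  simp [List.getLast_eq_getElem, getElem_spine, length_spine, iterate_spineLength]

theorem spine_eq_of_iterate {s : List α} (hs : s.Nodup) (hne : s ≠ [])
    (hiter : s = List.iterate x.parent x.tail s.length) (hlast : s.getLast hne = x.head) :
    x.spine = s := by
  have hget : ∀ i (hi : i < s.length), s[i] = x.parent^[i] x.tail := fun i hi => by
    rw [List.getElem_of_eq hiter, List.getElem_iterate]
  have hpos : 0 < s.length := List.length_pos_of_ne_nil hne
  rw [List.getLast_eq_getElem, hget] at hlast
  have hlen : x.spineLength = s.length - 1 := by
    classical
    unfold spineLength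
    refine (Nat.find_eq_iff _).2 ⟨hlast, fun j hj hjs => ?_⟩
    rw [← hlast, ← hget j (by omega), ← hget _ (by omega), hs.getElem_inj_iff] at hjs
    omega
  rw [spine, hlen, Nat.sub_add_cancel hpos, ← hiter]

variable [DecidableEq α]

theorem nextOr_spine {u : α} (hu : u ∈ x.spine) : x.spine.nextOr u u = x.parent u := by
  obtain ⟨i, hi, rfl⟩ := List.mem_iff_getElem.1 hu
  by_cases hlast : i + 1 < x.spine.length
  · rw [x.spine_nodup.nextOr_getElem hlast, getElem_spine, getElem_spine, iterate_succ_apply']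
  · have hL : i = x.spineLength := by rw [length_spine] at hi hlast; omega
    have := x.spine_nodup.nextOr_getLast x.spine_ne_nil x.head
    simp only [getLast_spine] at this
    simp only [hL, getElem_spine, iterate_spineLength, this, x.isParentMap.apply_root]

/-- Joyal's map: the `i`-th vertex of the fixed enumeration `C.toList` of the spine's vertex set
`C` is sent to the `i`-th spine vertex, counted from the tail. -/
noncomputable def toMap (u : α) : α :=
  if u ∈ x.spine then x.parent^[x.spine.toFinset.toList.idxOf u] x.tail else x.parent u

theorem map_toMap : x.spine.toFinset.toList.map x.toMap = x.spine := by
  set l := x.spine.toFinset.toList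
  have hlen : l.length = x.spine.length := by
    rw [Finset.length_toList, List.toFinset_card_of_nodup x.spine_nodup]
  refine List.ext_getElem (by simp [hlen]) fun i hi _ => ?_
  have hmem : l[i] ∈ x.spine := by
    simpa [l] using List.getElem_mem (l := l) (by simpa using hi)
  rw [List.getElem_map, toMap, if_pos hmem, (Finset.nodup_toList _).idxOf_getElem, getElem_spine]

theorem periodicPts_toMap : periodicPts x.toMap = {u | u ∈ x.spine} := by
  have hmem : ∀ {u}, u ∈ x.spine.toFinset.toList ↔ u ∈ x.spine := by simp
  have hmap := x.map_toMap
  refine periodicPts_eq_of_mapsTo_of_injOn x.spine.finite_toSet (fun u hu => ?_)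
    (fun u hu w hw => List.inj_on_of_nodup_map (by rw [hmap]; exact x.spine_nodup) (hmem.2 hu)
      (hmem.2 hw))
    (exists_iterate_mem_of_eqOn_compl (g := x.parent) (fun u hu => if_neg hu) fun u => ?_)
  · exact hmap ▸ List.mem_map_of_mem (hmem.2 hu)
  · obtain ⟨k, hk⟩ := x.isParentMap.exists_iterate_eq u
    exact ⟨k, hk ▸ x.getLast_spine ▸ List.getLast_mem x.spine_ne_nil⟩

end Spine

section OfMap

variable [Finite α] (f : α → α)

noncomputable def spineOfMap : List α := (periodicPtsFinset f).toList.map f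

theorem spineOfMap_nodup : (spineOfMap f).Nodup :=
  (Finset.nodup_toList _).map_on fun _ hu _ hw => (bijOn_periodicPts f).injOn
    (mem_periodicPtsFinset.1 (Finset.mem_toList.1 hu))
    (mem_periodicPtsFinset.1 (Finset.mem_toList.1 hw))

theorem mem_spineOfMap {u : α} : u ∈ spineOfMap f ↔ u ∈ periodicPts f := by
  simp only [spineOfMap, List.mem_map, Finset.mem_toList, mem_periodicPtsFinset]
  exact ⟨fun ⟨w, hw, hwu⟩ => hwu ▸ (bijOn_periodicPts f).mapsTo hw,
    fun hu => (bijOn_periodicPts f).surjOn hu⟩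

theorem spineOfMap_ne_nil [Nonempty α] : spineOfMap f ≠ [] := by
  obtain ⟨k, hk⟩ := exists_iterate_mem_periodicPts f (Classical.arbitrary α)
  exact List.ne_nil_of_mem ((mem_spineOfMap f).2 hk)

variable [DecidableEq α]

noncomputable def parentOfMap (u : α) : α :=
  if u ∈ spineOfMap f then (spineOfMap f).nextOr u u else f u

theorem parentOfMap_getElem {i : ℕ} (hi : i + 1 < (spineOfMap f).length) :
    parentOfMap f (spineOfMap f)[i] = (spineOfMap f)[i + 1] := by
  rw [parentOfMap, if_pos (List.getElem_mem _), (spineOfMap_nodup f).nextOr_getElem hi]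

variable [Nonempty α]

theorem spineOfMap_eq_iterate :
    spineOfMap f = List.iterate (parentOfMap f) ((spineOfMap f).head (spineOfMap_ne_nil f))
      (spineOfMap f).length :=
  List.eq_iterate_of_getElem_succ _ fun _ hi => parentOfMap_getElem f hi

theorem iterate_parentOfMap_head {i : ℕ} (hi : i < (spineOfMap f).length) :
    (parentOfMap f)^[i] ((spineOfMap f).head (spineOfMap_ne_nil f)) = (spineOfMap f)[i] := by
  rw [List.getElem_of_eq (spineOfMap_eq_iterate f), List.getElem_iterate]

theorem isParentMap_parentOfMap :
    IsParentMap (parentOfMap f) ((spineOfMap f).getLast (spineOfMap_ne_nil f)) := by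
  have hne := spineOfMap_ne_nil f
  refine ⟨?_, fun u => ?_⟩
  · rw [parentOfMap, if_pos (List.getLast_mem hne), (spineOfMap_nodup f).nextOr_getLast]
  obtain ⟨k, hk⟩ := exists_iterate_mem_of_eqOn_compl (C := {u | u ∈ spineOfMap f})
    (f := parentOfMap f) (g := f)
    (fun u hu => if_neg hu) (fun u => (exists_iterate_mem_periodicPts f u).imp
      fun _ h => (mem_spineOfMap f).2 h) u
  obtain ⟨i, hi, hki⟩ := List.mem_iff_getElem.1 hk
  refine ⟨(spineOfMap f).length - 1 - i + k, ?_⟩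
  rw [iterate_add_apply, ← hki, List.getLast_eq_getElem, ← iterate_parentOfMap_head f hi,
    ← iterate_parentOfMap_head f (by omega), ← iterate_add_apply, Nat.sub_add_cancel (by omega)]

noncomputable def ofMap : Vertebrate α where
  head := (spineOfMap f).getLast (spineOfMap_ne_nil f)
  tail := (spineOfMap f).head (spineOfMap_ne_nil f)
  parent := parentOfMap f
  isParentMap := isParentMap_parentOfMap f

theorem spine_ofMap : (ofMap f).spine = spineOfMap f :=
  (ofMap f).spine_eq_of_iterate (spineOfMap_nodup f) (spineOfMap_ne_nil f)
    (spineOfMap_eq_iterate f) rfl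

theorem toMap_ofMap : (ofMap f).toMap = f := by
  have hfin : (spineOfMap f).toFinset = periodicPtsFinset f := by
    ext u
    rw [List.mem_toFinset, mem_spineOfMap, mem_periodicPtsFinset]
  funext u
  rw [toMap, spine_ofMap, hfin]
  by_cases hu : u ∈ spineOfMap f
  · have hu' : u ∈ (periodicPtsFinset f).toList := by
      rwa [Finset.mem_toList, mem_periodicPtsFinset, ← mem_spineOfMap]
    have hidx := List.idxOf_lt_length_of_mem hu'
    rw [if_pos hu]
    refine (iterate_parentOfMap_head f (by simpa [spineOfMap] using hidx)).trans ?_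
    simp only [spineOfMap, List.getElem_map, List.getElem_idxOf]
  · rw [if_neg hu]
    exact if_neg hu

theorem ofMap_toMap (x : Vertebrate α) : ofMap x.toMap = x := by
  have hspine : spineOfMap x.toMap = x.spine := by
    have : periodicPtsFinset x.toMap = x.spine.toFinset := by
      ext u
      rw [mem_periodicPtsFinset, x.periodicPts_toMap, List.mem_toFinset]
      rfl
    rw [spineOfMap, this, x.map_toMap]
  refine Vertebrate.ext ?_ ?_ (funext fun u => ?_)
  · simp only [ofMap, hspine, x.getLast_spine]
  · simp [ofMap, hspine, spine]
  · simp only [ofMap, parentOfMap, hspine]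
    split_ifs with hu
    · exact x.nextOr_spine hu
    · exact if_neg hu

end OfMap

end Vertebrate

noncomputable def vertebrateEquivFun [Finite α] [Nonempty α] [DecidableEq α] :
    Vertebrate α ≃ (α → α) where
  toFun x := x.toMap
  invFun f := Vertebrate.ofMap f
  left_inv x := Vertebrate.ofMap_toMap x
  right_inv f := Vertebrate.toMap_ofMap f

noncomputable def vertebrateEquivTree [Finite α] :
    Vertebrate α ≃ (α × α) × {G : SimpleGraph α // G.IsTree} where
  toFun x := ((x.head, x.tail), parentMapEquivTree x.head ⟨x.parent, x.isParentMap⟩)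
  invFun y := ⟨y.1.1, y.1.2, ((parentMapEquivTree y.1.1).symm y.2).1,
    ((parentMapEquivTree y.1.1).symm y.2).2⟩
  left_inv x := by simp
  right_inv y := by simp

theorem card_isTree [Finite α] [Nonempty α] :
    Nat.card {G : SimpleGraph α // G.IsTree} = Nat.card α ^ (Nat.card α - 2) := by
  classical
  have hcount := Nat.card_congr (vertebrateEquivTree.symm.trans (vertebrateEquivFun (α := α)))
  rw [Nat.card_prod, Nat.card_prod, Nat.card_fun] at hcount
  set n := Nat.card α
  have hn : 0 < n := Nat.card_pos
  have hsplit : n ^ n = n * n * n ^ (n - 2) := by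
    rcases Nat.lt_or_ge n 2 with h | h
    · simp [show n = 1 by omega]
    · rw [← pow_two, ← pow_add, Nat.add_sub_cancel' h]
  rw [hsplit] at hcount
  exact Nat.eq_of_mul_eq_mul_left (by positivity) hcount

/-- Cayley's formula: the number of labeled trees on a vertex set with `n ≥ 1`
elements is `n^{n−2}`. -/
theorem cayley_formula (n : ℕ) (hn : 1 ≤ n) :
    Nat.card {G : SimpleGraph (Fin n) // G.IsTree} = n ^ (n - 2) := by
  have : Nonempty (Fin n) := ⟨⟨0, hn⟩⟩
  simpa using card_isTree (α := Fin n)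
end
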